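/- For all real parameters μ, ν, γ with 0 < μ ≤ 1, γ > 0, ν ≥ μγ, every real x ≥ 0, and every real s, the exponential generating function of the fractional generalized Bell polynomials satisfies ∑_{m=0}^∞ (s^m / m!) · B_{μ,ν}^γ(x, m) = Γ(ν) · E_{μ,ν}^γ(x(e^s − 1)), where B_{μ,ν}^γ(x, m) = Γ(ν) · ∑_{n=0}^∞ n^m · (x^n / n!) · (d^n/dz^n E_{μ,ν}^γ)(−x). -/

import Mathlib

/-- The three-parameter Mittag-Leffler (Prabhakar) function
`E_{μ,ν}^γ(z) = ∑_{m=0}^∞ ((γ)_m / (m! Γ(μ m + ν))) z^m`,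
where `(γ)_m = Γ(γ+m)/Γ(γ)`. -/
noncomputable def prabhakar (μ ν γ : ℝ) (z : ℂ) : ℂ :=
  ∑' m : ℕ,
    (((Real.Gamma (γ + m) / Real.Gamma γ) / (m.factorial * Real.Gamma (μ * m + ν)) : ℝ) : ℂ)
      * z ^ m

/-- The fractional generalized Bell polynomial of order `m`:
`B_{μ,ν}^γ(x,m) = Γ(ν) ∑_n n^m (x^n/n!) (d^n/dz^n E_{μ,ν}^γ)(−x)`. -/
noncomputable def fracBellPoly (μ ν γ x : ℝ) (m : ℕ) : ℂ :=
  (Real.Gamma ν : ℂ) * ∑' n : ℕ, (n : ℂ) ^ m * ((x ^ n / n.factorial : ℝ) : ℂ)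
    * iteratedDeriv n (prabhakar μ ν γ) (-(x : ℂ))

/-! The Prabhakar function is entire: consecutive coefficients have ratio
`(γ + n) / (n + 1) · Γ(μn + ν) / Γ(μn + ν + μ) → 0`, the Gamma quotient being at most
`(μn + ν - 1) ^ (-μ)` by log-convexity of `Γ`. For any entire `f`, the double series
`∑ₘ sᵐ/m! ∑ₙ nᵐ wⁿ/n! f⁽ⁿ⁾(a)` converges absolutely, so the sum over `m` may be taken first;
it produces `eⁿˢ`, which leaves the Taylor series of `f` at `a` evaluated at `a + w eˢ`.
With `f = E_{μ,ν}^γ`, `a = -x` and `w = x` this point is `x (eˢ - 1)`. -/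

open Filter Topology FormalMultilinearSeries
open scoped Nat NNReal ENNReal

lemma Real.hasSum_pow_div_factorial (x : ℝ) :
    HasSum (fun m : ℕ => x ^ m / m !) (Real.exp x) := by
  rw [Real.exp_eq_exp_ℝ]
  exact NormedSpace.expSeries_div_hasSum_exp x

lemma Complex.hasSum_pow_div_factorial (z : ℂ) :
    HasSum (fun m : ℕ => z ^ m / m !) (Complex.exp z) := by
  rw [Complex.exp_eq_exp_ℂ]
  exact NormedSpace.expSeries_div_hasSum_exp z

section Entire

variable {E : Type*} [NormedAddCommGroup E] [NormedSpace ℂ E] [CompleteSpace E] {f : ℂ → E}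

theorem Differentiable.summable_norm_iteratedDeriv_div_factorial_mul_pow
    (hf : Differentiable ℂ f) (a : ℂ) (r : ℝ≥0) :
    Summable fun n : ℕ => ‖iteratedDeriv n f a‖ / n ! * (r : ℝ) ^ n := by
  have hp := hf.hasFPowerSeriesOnBall a one_pos
  set p := cauchyPowerSeries f a ((1 : ℝ≥0) : ℝ)
  have hr : (r : ℝ≥0∞) < p.radius := by
    rw [eq_top_iff.2 hp.r_le]
    exact ENNReal.coe_lt_top
  refine (p.summable_norm_mul_pow hr).congr fun n => ?_
  rw [iteratedDeriv_eq_iteratedFDeriv, ← hp.factorial_smul 1 n, ← Nat.cast_smul_eq_nsmul ℂ,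
    norm_smul, Complex.norm_natCast, apply_eq_pow_smul_coeff, one_pow, one_smul,
    ← norm_apply_eq_norm_coef, mul_div_cancel_left₀ _ (by positivity : (n ! : ℝ) ≠ 0)]

theorem Differentiable.summable_pow_div_factorial_mul_natCast_pow_smul_iteratedDeriv
    (hf : Differentiable ℂ f) (a w s : ℂ) :
    Summable fun p : ℕ × ℕ =>
      (s ^ p.2 / p.2 ! * ((p.1 : ℂ) ^ p.2 * (w ^ p.1 / p.1 !))) • iteratedDeriv p.1 f a := by
  have hrow (n : ℕ) : HasSum
      (fun m => ‖(s ^ m / m ! * ((n : ℂ) ^ m * (w ^ n / n !))) • iteratedDeriv n f a‖)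
      (‖iteratedDeriv n f a‖ / n ! * (‖w‖ * Real.exp ‖s‖) ^ n) := by
    have hterm : (fun m => ‖(s ^ m / m ! * ((n : ℂ) ^ m * (w ^ n / n !))) • iteratedDeriv n f a‖)
        = fun m => (n * ‖s‖) ^ m / m ! * (‖iteratedDeriv n f a‖ / n ! * ‖w‖ ^ n) := by
      ext m
      simp only [norm_smul, norm_mul, norm_div, norm_pow, Complex.norm_natCast]
      ring
    have hsum : ‖iteratedDeriv n f a‖ / n ! * (‖w‖ * Real.exp ‖s‖) ^ n
        = Real.exp (n * ‖s‖) * (‖iteratedDeriv n f a‖ / n ! * ‖w‖ ^ n) := by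
      rw [Real.exp_nat_mul]
      ring
    rw [hterm, hsum]
    exact (Real.hasSum_pow_div_factorial _).mul_right _
  refine Summable.of_norm ((summable_prod_of_nonneg fun _ => norm_nonneg _).2
    ⟨fun n => (hrow n).summable, ?_⟩)
  simp only [(hrow _).tsum_eq]
  exact hf.summable_norm_iteratedDeriv_div_factorial_mul_pow a ⟨‖w‖ * Real.exp ‖s‖, by positivity⟩

theorem Differentiable.tsum_pow_div_factorial_smul_tsum_natCast_pow_smul_iteratedDeriv
    (hf : Differentiable ℂ f) (a w s : ℂ) :
    ∑' m : ℕ, (s ^ m / m !) • ∑' n : ℕ, ((n : ℂ) ^ m * (w ^ n / n !)) • iteratedDeriv n f a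
      = f (a + w * Complex.exp s) := by
  set g : ℕ → ℕ → E := fun n m => (s ^ m / m ! * ((n : ℂ) ^ m * (w ^ n / n !))) •
    iteratedDeriv n f a with hg
  have hrow (n : ℕ) : HasSum (g n)
      ((n ! : ℂ)⁻¹ • (a + w * Complex.exp s - a) ^ n • iteratedDeriv n f a) := by
    convert ((Complex.hasSum_pow_div_factorial (n * s)).mul_right (w ^ n / n !)).smul_const
      (iteratedDeriv n f a) using 1
    · ext m
      simp only [hg]
      ring_nf
    · rw [smul_smul, add_sub_cancel_left, Complex.exp_nat_mul]
      ring_nf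
  calc _ = ∑' (m : ℕ) (n : ℕ), g n m := by
        simp only [hg, ← tsum_const_smul'', smul_smul]
    _ = ∑' (n : ℕ) (m : ℕ), g n m :=
        (hf.summable_pow_div_factorial_mul_natCast_pow_smul_iteratedDeriv a w s).tsum_comm
    _ = f (a + w * Complex.exp s) := by
        simp only [fun n => (hrow n).tsum_eq]
        exact Complex.taylorSeries_eq_of_entire hf a _

end Entire

namespace Real

theorem Gamma_div_Gamma_add_le_rpow {μ t : ℝ} (hμ : 0 < μ) (ht : 1 < t) :
    Gamma t / Gamma (t + μ) ≤ (t - 1) ^ (-μ) := by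
  have ht1 : 0 < t - 1 := by linarith
  have hΓt : 0 < Gamma t := Gamma_pos_of_pos (by linarith)
  have hΓtμ : 0 < Gamma (t + μ) := Gamma_pos_of_pos (by linarith)
  have hrec : Gamma t = (t - 1) * Gamma (t - 1) := by
    simpa using Gamma_add_one ht1.ne'
  have hlog : log (Gamma t) - log (Gamma (t - 1)) = log (t - 1) := by
    rw [hrec, log_mul ht1.ne' (Gamma_pos_of_pos ht1).ne', add_sub_cancel_right]
  have hslope := convexOn_log_Gamma.slope_mono_adjacent (x := t - 1) (y := t) (z := t + μ)
    (Set.mem_Ioi.2 ht1) (Set.mem_Ioi.2 (by linarith)) (by linarith) (by linarith)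
  simp only [Function.comp_apply, sub_sub_cancel, div_one, hlog, add_sub_cancel_left] at hslope
  calc Gamma t / Gamma (t + μ) = exp (-(log (Gamma (t + μ)) - log (Gamma t))) := by
        rw [neg_sub, exp_sub, exp_log hΓt, exp_log hΓtμ]
    _ ≤ exp (log (t - 1) * (-μ)) := by
        gcongr
        linarith [(le_div_iff₀ hμ).mp hslope]
    _ = (t - 1) ^ (-μ) := (rpow_def_of_pos ht1 _).symm

theorem tendsto_Gamma_div_Gamma_add_atTop {μ : ℝ} (hμ : 0 < μ) :
    Tendsto (fun t => Gamma t / Gamma (t + μ)) atTop (𝓝 0) := by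
  refine squeeze_zero' ?_ ?_
    ((tendsto_rpow_neg_atTop hμ).comp (tendsto_atTop_add_const_right _ (-1) tendsto_id))
  · filter_upwards [eventually_gt_atTop 0] with t ht
    exact div_nonneg (Gamma_pos_of_pos ht).le (Gamma_pos_of_pos (by linarith)).le
  · filter_upwards [eventually_gt_atTop 1] with t ht
    exact Gamma_div_Gamma_add_le_rpow hμ ht

end Real

noncomputable def prabhakarCoeff (μ ν γ : ℝ) (m : ℕ) : ℝ :=
  Real.Gamma (γ + m) / Real.Gamma γ / (m ! * Real.Gamma (μ * m + ν))

noncomputable def prabhakarSeries (μ ν γ : ℝ) : FormalMultilinearSeries ℂ ℂ ℂ :=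
  ofScalars ℂ fun m => (prabhakarCoeff μ ν γ m : ℂ)

section Prabhakar

variable {μ ν γ : ℝ}

theorem prabhakarCoeff_pos (hμ : 0 ≤ μ) (hγ : 0 < γ) (hν : 0 < ν) (m : ℕ) :
    0 < prabhakarCoeff μ ν γ m := by
  have := Real.Gamma_pos_of_pos (by positivity : 0 < γ + m)
  have := Real.Gamma_pos_of_pos hγ
  have := Real.Gamma_pos_of_pos (by positivity : 0 < μ * m + ν)
  unfold prabhakarCoeff
  positivity

theorem prabhakarCoeff_succ (hμ : 0 ≤ μ) (hγ : 0 < γ) (hν : 0 < ν) (n : ℕ) :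
    prabhakarCoeff μ ν γ (n + 1) = prabhakarCoeff μ ν γ n * ((γ + n) / (n + 1)) *
      (Real.Gamma (μ * n + ν) / Real.Gamma (μ * n + ν + μ)) := by
  have := (Real.Gamma_pos_of_pos hγ).ne'
  have := (Real.Gamma_pos_of_pos (by positivity : 0 < μ * n + ν)).ne'
  have := (Real.Gamma_pos_of_pos (by positivity : 0 < μ * n + ν + μ)).ne'
  have hγn : γ + n ≠ 0 := by positivity
  rw [prabhakarCoeff, prabhakarCoeff, Nat.factorial_succ, Nat.cast_mul, Nat.cast_succ,
    ← add_assoc, Real.Gamma_add_one hγn, show μ * (n + 1) + ν = μ * n + ν + μ by ring]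
  field_simp

theorem tendsto_prabhakarCoeff_succ_div (hμ : 0 < μ) (hγ : 0 < γ) (hν : 0 < ν) :
    Tendsto (fun n => prabhakarCoeff μ ν γ (n + 1) / prabhakarCoeff μ ν γ n) atTop (𝓝 0) := by
  have hfrac : Tendsto (fun n : ℕ => (γ + n) / (n + 1)) atTop (𝓝 1) := by
    have h := (tendsto_natCast_div_add_atTop (1 : ℝ)).add
      ((tendsto_const_div_atTop_nhds_zero_nat γ).comp (tendsto_add_atTop_nat 1))
    rw [add_zero] at h
    refine h.congr fun n => ?_
    simp only [Function.comp_apply, Nat.cast_add, Nat.cast_one]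
    ring
  have hGamma : Tendsto (fun n : ℕ => Real.Gamma (μ * n + ν) / Real.Gamma (μ * n + ν + μ))
      atTop (𝓝 0) :=
    (Real.tendsto_Gamma_div_Gamma_add_atTop hμ).comp <| tendsto_atTop_add_const_right _ ν
      (tendsto_natCast_atTop_atTop.const_mul_atTop hμ)
  simpa [prabhakarCoeff_succ hμ.le hγ hν, mul_assoc, (prabhakarCoeff_pos hμ.le hγ hν _).ne']
    using hfrac.mul hGamma

theorem prabhakarSeries_radius (hμ : 0 < μ) (hγ : 0 < γ) (hν : 0 < ν) :
    (prabhakarSeries μ ν γ).radius = ⊤ := by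
  refine ofScalars_radius_eq_top_of_tendsto _ _ (Eventually.of_forall fun n => ?_) ?_
  · exact_mod_cast (prabhakarCoeff_pos hμ.le hγ hν n).ne'
  · simpa only [Complex.norm_real, Real.norm_of_nonneg (prabhakarCoeff_pos hμ.le hγ hν _).le]
      using tendsto_prabhakarCoeff_succ_div hμ hγ hν

theorem prabhakar_eq_sum (μ ν γ : ℝ) : prabhakar μ ν γ = (prabhakarSeries μ ν γ).sum := by
  ext z
  simp only [prabhakar, prabhakarSeries, FormalMultilinearSeries.sum, ofScalars_apply_eq,
    smul_eq_mul]
  rfl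

theorem differentiable_prabhakar (hμ : 0 < μ) (hγ : 0 < γ) (hν : 0 < ν) :
    Differentiable ℂ (prabhakar μ ν γ) := by
  have hr := prabhakarSeries_radius hμ hγ hν
  have h := (prabhakarSeries μ ν γ).hasFPowerSeriesOnBall (hr ▸ ENNReal.zero_lt_top)
  rw [hr, ← prabhakar_eq_sum] at h
  exact fun z => (h.analyticAt_of_mem (by simp)).differentiableAt

end Prabhakar

theorem fracBellPoly_egf_general (μ ν γ : ℝ) (hμ0 : 0 < μ) (hγ : 0 < γ)
    (hν : μ * γ ≤ ν) (x : ℝ) (s : ℝ) :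
    ∑' m : ℕ, ((s ^ m / m.factorial : ℝ) : ℂ) * fracBellPoly μ ν γ x m
      = (Real.Gamma ν : ℂ) * prabhakar μ ν γ ((x * (Real.exp s - 1) : ℝ) : ℂ) := by
  have hν0 : 0 < ν := (mul_pos hμ0 hγ).trans_le hν
  have hz : -(x : ℂ) + x * Complex.exp s = ((x * (Real.exp s - 1) : ℝ) : ℂ) := by
    push_cast
    ring
  have htaylor := (differentiable_prabhakar hμ0 hγ hν0)
    |>.tsum_pow_div_factorial_smul_tsum_natCast_pow_smul_iteratedDeriv (-x) x s
  rw [← hz, ← htaylor, ← tsum_mul_left]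
  refine tsum_congr fun m => ?_
  simp only [fracBellPoly, smul_eq_mul]
  push_cast
  ring

/-- Exponential generating function of the fractional generalized Bell polynomials:
`∑_m (s^m/m!) B_{μ,ν}^γ(x,m) = Γ(ν) E_{μ,ν}^γ(x(e^s−1))`. -/
theorem fracBellPoly_egf (μ ν γ : ℝ) (hμ0 : 0 < μ) (hμ1 : μ ≤ 1) (hγ : 0 < γ)
    (hν : μ * γ ≤ ν) (x : ℝ) (hx : 0 ≤ x) (s : ℝ) :
    ∑' m : ℕ, ((s ^ m / m.factorial : ℝ) : ℂ) * fracBellPoly μ ν γ x m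
      = (Real.Gamma ν : ℂ) * prabhakar μ ν γ ((x * (Real.exp s - 1) : ℝ) : ℂ) :=
  fracBellPoly_egf_general μ ν γ hμ0 hγ hν x s
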